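/- arXiv:2605.24586 — 2 statements merged into one kernel-verified Lean document; each statement's English description precedes it below -/
import Mathlib

section
/- Let d > 0 and let p(x) be a polynomial of degree d with p(x) = Σ_{j=0}^{d} h*_j · C(x + d − j, d) and h*_0 = 1. Then the coefficient of x in p(x) equals H_d + (1/d) Σ_{j=1}^{d} (−1)^{j−1} h*_j / C(d−1, j−1). -/
/-
Expanding the product defining `C(x + d - j, d)`, its coefficient of `x` is `1/d!` times the sum
over `i` of the products of all constant terms but the `i`-th. For `j = 0` the constant terms are
`d, d - 1, …, 1`, which gives `H_d`. For `1 ≤ j ≤ d` one constant term, `d - j - (d - j)`, vanishes,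
so only the product omitting it survives; it equals `(d - j)! (-1)^(j-1) (j - 1)!`, and
`(d - j)! (j - 1)! / d! = 1 / (d C(d-1, j-1))`.
-/

/-- The polynomial binomial coefficient `C(x + d - j, d) = (x+d-j)(x+d-j-1)⋯(x-j+1)/d!`. -/
noncomputable def binomPoly (d j : ℕ) : Polynomial ℚ :=
  ((d.factorial : ℚ)⁻¹) • ∏ i ∈ Finset.range d, (Polynomial.X + Polynomial.C ((d : ℚ) - j - i))

open Polynomial Finset
open scoped Nat

theorem Polynomial.coeff_one_prod_X_add_C {R ι : Type*} [CommSemiring R] [DecidableEq ι]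
    (s : Finset ι) (f : ι → R) :
    (∏ i ∈ s, (X + C (f i))).coeff 1 = ∑ i ∈ s, ∏ k ∈ s.erase i, f k := by
  have h := coeff_derivative (∏ i ∈ s, (X + C (f i))) 0
  rw [zero_add, Nat.cast_zero, zero_add, mul_one] at h
  rw [← h, coeff_zero_eq_eval_zero, derivative_prod_finset, eval_finsetSum]
  simp [eval_prod]

theorem Finset.sum_prod_erase_eq_prod_mul_sum_inv {K ι : Type*} [Field K] [DecidableEq ι]
    (s : Finset ι) (f : ι → K) (hf : ∀ i ∈ s, f i ≠ 0) :
    ∑ i ∈ s, ∏ k ∈ s.erase i, f k = (∏ i ∈ s, f i) * ∑ i ∈ s, (f i)⁻¹ := by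
  rw [mul_sum]
  refine sum_congr rfl fun i hi => ?_
  rw [← mul_prod_erase s f hi, mul_comm (f i), mul_assoc, mul_inv_cancel₀ (hf i hi), mul_one]

theorem prod_range_natCast_sub_self {R : Type*} [CommRing R] (n : ℕ) :
    ∏ k ∈ range n, ((n : R) - k) = n ! := by
  rw [prod_range_natCast_sub, ← Nat.descFactorial_eq_prod_range, Nat.descFactorial_self]

theorem sum_range_inv_natCast_sub (n : ℕ) :
    ∑ k ∈ range n, ((n : ℚ) - k)⁻¹ = harmonic n := by
  rw [← sum_range_reflect, harmonic]
  refine sum_congr rfl fun k hk => ?_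
  have hk : k < n := mem_range.mp hk
  rw [Nat.cast_sub (by omega), Nat.cast_sub (by omega)]
  push_cast
  ring_nf

theorem prod_erase_range_natCast_sub {R : Type*} [CommRing R] {s n : ℕ} (hsn : s < n) :
    ∏ k ∈ (range n).erase s, ((s : R) - k) = (-1) ^ (n - 1 - s) * s ! * (n - 1 - s)! := by
  induction n, hsn using Nat.le_induction with
  | base =>
    rw [range_add_one, erase_insert notMem_range_self, prod_range_natCast_sub_self]
    simp
  | succ n hsn ih =>
    rw [range_add_one, erase_insert_of_ne (by omega), prod_insert (by simp), ih,
      show n + 1 - 1 - s = (n - 1 - s) + 1 by omega, Nat.factorial_succ]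
    have : (s : R) - n = -((n - 1 - s : ℕ) + 1) := by
      rw [Nat.cast_sub (by omega), Nat.cast_sub (by omega)]
      push_cast
      ring
    rw [this]
    push_cast
    ring

theorem coeff_one_binomPoly_zero (d : ℕ) : (binomPoly d 0).coeff 1 = harmonic d := by
  have hne : ∀ i ∈ range d, ((d : ℚ) - i) ≠ 0 := fun i hi =>
    sub_ne_zero.mpr (by exact_mod_cast (mem_range.mp hi).ne')
  rw [binomPoly, coeff_smul, smul_eq_mul]
  simp only [Nat.cast_zero, sub_zero]
  rw [coeff_one_prod_X_add_C, sum_prod_erase_eq_prod_mul_sum_inv _ _ hne,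
    prod_range_natCast_sub_self, sum_range_inv_natCast_sub, ← mul_assoc,
    inv_mul_cancel₀ (by positivity), one_mul]

theorem factorial_mul_factorial_div_factorial {d j : ℕ} (hj : 1 ≤ j) (hjd : j ≤ d) :
    ((d - j)! * (j - 1)! : ℚ) / d ! = 1 / (d * (d - 1).choose (j - 1)) := by
  have h := Nat.choose_mul_factorial_mul_factorial (show j - 1 ≤ d - 1 by omega)
  rw [show d - 1 - (j - 1) = d - j by omega] at h
  rw [← Nat.mul_factorial_pred (show d ≠ 0 by omega), ← h]
  have : ((d - 1).choose (j - 1) : ℚ) ≠ 0 := by exact_mod_cast (Nat.choose_pos (by omega)).ne'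
  have : (d : ℚ) ≠ 0 := by exact_mod_cast (show d ≠ 0 by omega)
  push_cast
  field_simp

theorem coeff_one_binomPoly_of_pos {d j : ℕ} (hj : 1 ≤ j) (hjd : j ≤ d) :
    (binomPoly d j).coeff 1 = (-1) ^ (j - 1) / (d * (d - 1).choose (j - 1)) := by
  have hs : d - j < d := by omega
  have hcast : (d : ℚ) - j = (d - j : ℕ) := by rw [Nat.cast_sub hjd]
  rw [binomPoly, coeff_smul, smul_eq_mul, coeff_one_prod_X_add_C, sum_eq_single (d - j)]
  · simp only [hcast]
    rw [prod_erase_range_natCast_sub hs, show d - 1 - (d - j) = j - 1 by omega, div_eq_mul_one_div,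
      ← factorial_mul_factorial_div_factorial hj hjd]
    ring
  · intro i _ hi
    refine prod_eq_zero (mem_erase.mpr ⟨Ne.symm hi, mem_range.mpr hs⟩) ?_
    rw [hcast, sub_self]
  · exact fun h => absurd (mem_range.mpr hs) h

theorem stmt_7_general (d : ℕ) (p : Polynomial ℚ) (hstar : ℕ → ℚ)
    (hp : p = ∑ j ∈ Finset.range (d + 1), Polynomial.C (hstar j) * binomPoly d j)
    (h0 : hstar 0 = 1) :
    p.coeff 1 =
      harmonic d +
        (1 / (d : ℚ)) *
          ∑ j ∈ Finset.Icc 1 d, (-1 : ℚ) ^ (j - 1) * hstar j / ((d - 1).choose (j - 1) : ℚ) := by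
  have hrange : range (d + 1) = insert 0 (Icc 1 d) := by
    ext j
    simp only [mem_range, mem_insert, mem_Icc]
    omega
  rw [hp, finsetSum_coeff, hrange, sum_insert (by simp), coeff_C_mul, h0, one_mul,
    coeff_one_binomPoly_zero, mul_sum]
  congr 1
  refine sum_congr rfl fun j hj => ?_
  obtain ⟨hj, hjd⟩ := mem_Icc.mp hj
  rw [coeff_C_mul, coeff_one_binomPoly_of_pos hj hjd]
  ring

theorem stmt_7 (d : ℕ) (hd : 0 < d) (p : Polynomial ℚ) (hstar : ℕ → ℚ)
    (hp : p = ∑ j ∈ Finset.range (d + 1), Polynomial.C (hstar j) * binomPoly d j)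
    (h0 : hstar 0 = 1) :
    p.coeff 1 =
      harmonic d +
        (1 / (d : ℚ)) *
          ∑ j ∈ Finset.Icc 1 d, (-1 : ℚ) ^ (j - 1) * hstar j / ((d - 1).choose (j - 1) : ℚ) :=
  stmt_7_general d p hstar hp h0
end

section
/- For all non-negative integers n and positive integers k, the number of lattice points (x₁,…,x_n,y₁,…,y_n) ∈ ℤ^{2n} with 0 ≤ x₁ ≤ ⋯ ≤ x_n ≤ k−1 and 0 ≤ y_i ≤ x_i for all i, equals the Stirling number of the second kind S(n+k, k). -/
open scoped Classical

/-- The Stirling number of the second kind `S(m, k)`: the number of partitions of an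
`m`-element set into `k` non-empty blocks. -/
noncomputable def stirling2 (m k : ℕ) : ℕ :=
  Nat.card {P : Finpartition (Finset.univ : Finset (Fin m)) // P.parts.card = k}

/-- The complete homogeneous symmetric polynomial of degree `n` evaluated at
`(1, 2, …, k)`, i.e. `∑_{1 ≤ z₁ ≤ ⋯ ≤ z_n ≤ k} z₁ ⋯ z_n`. -/
noncomputable def hNat (n k : ℕ) : ℕ :=
  ∑ f ∈ Finset.univ.filter (fun f : Fin n → Fin k => Monotone f), ∏ i, ((f i : ℕ) + 1)

/-!
Writing a lattice point as a monotone `x : Fin n → Fin k` together with `yᵢ ∈ {0, …, xᵢ}`, the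
number of points is `h_n(1, …, k) = ∑_{x₁ ≤ ⋯ ≤ x_n} ∏ (xᵢ + 1)`. Splitting according to whether
the largest value `k - 1` is attained gives `h_{n+1}(1, …, k+1) = (k+1) h_n(1, …, k+1) +
h_{n+1}(1, …, k)`. Removing one point from a set partition, which was either a singleton block or
sat in one of the remaining `k + 1` blocks, gives the same recurrence
`S(m+1, k+1) = (k+1) S(m, k+1) + S(m, k)`, so `S(n+k, k) = h_n(1, …, k)`.
-/

open Finset

namespace Finpartition

variable {α : Type*} [DecidableEq α] {s t : Finset α} {a : α}

lemma parts_avoid_of_mem_insert_empty (P : Finpartition s) (ht : t ∈ insert ∅ P.parts) :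
    (P.avoid t).parts = P.parts.erase t := by
  have hdisj : ∀ d ∈ P.parts, d ≠ t → Disjoint d t := fun d hd hdt => by
    rcases mem_insert.1 ht with rfl | ht
    · exact disjoint_empty_right d
    · exact P.disjoint hd ht hdt
  ext c
  simp only [mem_avoid, mem_erase]
  constructor
  · rintro ⟨d, hd, hdt, rfl⟩
    have hne : d ≠ t := by rintro rfl; exact hdt subset_rfl
    rw [(hdisj d hd hne).sdiff_eq_left]
    exact ⟨hne, hd⟩
  · rintro ⟨hct, hc⟩
    refine ⟨c, hc, fun hsub => P.ne_empty hc ?_, (hdisj c hc hct).sdiff_eq_left⟩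
    exact (hdisj c hc hct).eq_bot_of_le hsub

def ofInsert (P : Finpartition (insert a s)) (ha : a ∉ s) : Finpartition s :=
  (P.avoid {a}).copy (by rw [sdiff_singleton_eq_erase, erase_insert ha])

lemma mem_ofInsert {P : Finpartition (insert a s)} {ha : a ∉ s} {c : Finset α} :
    c ∈ (P.ofInsert ha).parts ↔ c ≠ ∅ ∧ ∃ d ∈ P.parts, d.erase a = c := by
  simp only [ofInsert, copy_parts, mem_avoid, sdiff_singleton_eq_erase,
    subset_singleton_iff, ← erase_eq_empty_iff]
  exact ⟨fun ⟨d, hd, hne, hdc⟩ => ⟨hdc ▸ hne, d, hd, hdc⟩,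
    fun ⟨hne, d, hd, hdc⟩ => ⟨d, hd, hdc ▸ hne, hdc⟩⟩

lemma subset_of_mem_insert_empty (P : Finpartition s) (ht : t ∈ insert ∅ P.parts) : t ⊆ s := by
  rcases mem_insert.1 ht with rfl | ht
  · exact empty_subset s
  · exact P.le ht

/-- Adds `a` to the block `t`; for `t = ∅` this makes `{a}` a new block. -/
def insertInto (Q : Finpartition s) (ha : a ∉ s) (t : Finset α) (ht : t ∈ insert ∅ Q.parts) :
    Finpartition (insert a s) :=
  (Q.avoid t).extend (b := insert a t) (insert_ne_empty a t)
    (disjoint_insert_right.2 ⟨fun h => ha (mem_sdiff.1 h).1, sdiff_disjoint⟩)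
    (by
      have := subset_of_mem_insert_empty Q ht
      ext x; simp only [sup_eq_union, mem_union, mem_sdiff, mem_insert]
      grind)

lemma parts_insertInto (Q : Finpartition s) (ha : a ∉ s) (ht : t ∈ insert ∅ Q.parts) :
    (Q.insertInto ha t ht).parts = insert (insert a t) (Q.parts.erase t) :=
  congrArg (insert _) (parts_avoid_of_mem_insert_empty Q ht)

lemma card_parts_insertInto (Q : Finpartition s) (ha : a ∉ s) (ht : t ∈ insert ∅ Q.parts) :
    #(Q.insertInto ha t ht).parts = #Q.parts + if t = ∅ then 1 else 0 := by
  rw [insertInto, card_extend, parts_avoid_of_mem_insert_empty Q ht]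
  split_ifs with h
  · rw [h, erase_eq_of_notMem Q.empty_notMem_parts]
  · rw [card_erase_add_one ((mem_insert.1 ht).resolve_left h), add_zero]

lemma part_insertInto (Q : Finpartition s) (ha : a ∉ s) (ht : t ∈ insert ∅ Q.parts) :
    (Q.insertInto ha t ht).part a = insert a t :=
  part_eq_of_mem _ (by rw [parts_insertInto]; exact mem_insert_self _ _) (mem_insert_self a t)

lemma erase_part_insertInto (Q : Finpartition s) (ha : a ∉ s) (ht : t ∈ insert ∅ Q.parts) :
    ((Q.insertInto ha t ht).part a).erase a = t := by
  rw [part_insertInto, erase_insert fun h => ha (subset_of_mem_insert_empty Q ht h)]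

lemma ofInsert_insertInto (Q : Finpartition s) (ha : a ∉ s) (ht : t ∈ insert ∅ Q.parts) :
    (Q.insertInto ha t ht).ofInsert ha = Q := by
  have erase_of_mem : ∀ d ∈ Q.parts, d.erase a = d := fun d hd =>
    erase_eq_of_notMem fun h => ha (Q.le hd h)
  have hat : a ∉ t := fun h => ha (subset_of_mem_insert_empty Q ht h)
  ext c
  rw [mem_ofInsert, parts_insertInto]
  simp only [exists_mem_insert, mem_erase]
  constructor
  · rintro ⟨hc, rfl | ⟨d, ⟨-, hd⟩, rfl⟩⟩
    · rw [erase_insert hat] at hc ⊢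
      exact (mem_insert.1 ht).resolve_left hc
    · rwa [erase_of_mem d hd]
  · intro hc
    refine ⟨Q.ne_empty hc, ?_⟩
    by_cases hct : c = t
    · exact .inl (by rw [erase_insert hat, hct])
    · exact .inr ⟨c, ⟨hct, hc⟩, erase_of_mem c hc⟩

lemma erase_part_mem_insert_empty (P : Finpartition (insert a s)) (ha : a ∉ s) :
    (P.part a).erase a ∈ insert ∅ (P.ofInsert ha).parts := by
  by_cases h : (P.part a).erase a = ∅
  · rw [h]; exact mem_insert_self _ _
  · exact mem_insert_of_mem (mem_ofInsert.2 ⟨h, _, P.part_mem.2 (mem_insert_self a s), rfl⟩)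

lemma insertInto_ofInsert (P : Finpartition (insert a s)) (ha : a ∉ s) :
    (P.ofInsert ha).insertInto ha _ (P.erase_part_mem_insert_empty ha) = P := by
  set T := P.part a
  have hT : T ∈ P.parts := P.part_mem.2 (mem_insert_self a s)
  have haT : a ∈ T := P.mem_part_self.2 (mem_insert_self a s)
  have not_mem_of_ne : ∀ d ∈ P.parts, d ≠ T → a ∉ d := fun d hd hdT had =>
    hdT (P.eq_of_mem_parts hd hT had haT)
  ext c
  rw [parts_insertInto, insert_erase haT]
  simp only [mem_insert, mem_erase, mem_ofInsert]
  constructor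
  · rintro (rfl | ⟨hcT, -, d, hd, rfl⟩)
    · exact hT
    · have hdT : d ≠ T := by rintro rfl; exact hcT rfl
      rwa [erase_eq_of_notMem (not_mem_of_ne d hd hdT)]
  · intro hc
    by_cases hcT : c = T
    · exact .inl hcT
    have hac := not_mem_of_ne c hc hcT
    refine .inr ⟨fun h => hcT ?_, P.ne_empty hc, c, hc, erase_eq_of_notMem hac⟩
    obtain ⟨x, hx⟩ := P.nonempty_of_mem_parts hc
    exact P.eq_of_mem_parts hc hT hx (mem_of_mem_erase (h ▸ hx))

lemma card_parts_ofInsert (P : Finpartition (insert a s)) (ha : a ∉ s) :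
    #(P.ofInsert ha).parts + (if (P.part a).erase a = ∅ then 1 else 0) = #P.parts := by
  conv_rhs => rw [← P.insertInto_ofInsert ha]
  rw [card_parts_insertInto]

noncomputable def insertEquiv (ha : a ∉ s) (k : ℕ) :
    {P : Finpartition (insert a s) // #P.parts = k + 1} ≃
      (Σ Q : {Q : Finpartition s // #Q.parts = k + 1}, Q.1.parts) ⊕
        {Q : Finpartition s // #Q.parts = k} where
  toFun P :=
    if h : (P.1.part a).erase a = ∅ then
      .inr ⟨P.1.ofInsert ha, by
        have := P.1.card_parts_ofInsert ha; rw [if_pos h, P.2] at this; omega⟩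
    else
      .inl ⟨⟨P.1.ofInsert ha, by
        have := P.1.card_parts_ofInsert ha; rwa [if_neg h, P.2, add_zero] at this⟩,
        ⟨_, (mem_insert.1 (P.1.erase_part_mem_insert_empty ha)).resolve_left h⟩⟩
  invFun
    | .inl ⟨Q, t⟩ => ⟨Q.1.insertInto ha t (mem_insert_of_mem t.2), by
        rw [card_parts_insertInto, if_neg (Q.1.ne_empty t.2), Q.2, add_zero]⟩
    | .inr Q => ⟨Q.1.insertInto ha ∅ (mem_insert_self _ _), by
        rw [card_parts_insertInto, if_pos rfl, Q.2]⟩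
  left_inv P := by
    by_cases h : (P.1.part a).erase a = ∅
    · simp only [dif_pos h]
      refine Subtype.ext ?_
      convert P.1.insertInto_ofInsert ha using 2
      exact h.symm
    · simp only [dif_neg h]
      exact Subtype.ext (P.1.insertInto_ofInsert ha)
  right_inv
    | .inl ⟨Q, t⟩ => by
      have h := Q.1.erase_part_insertInto ha (mem_insert_of_mem t.2)
      simp only [h, dif_neg (Q.1.ne_empty t.2)]
      exact congrArg Sum.inl (Sigma.subtype_ext (Subtype.ext (Q.1.ofInsert_insertInto ha _)) rfl)
    | .inr Q => by
      have h := Q.1.erase_part_insertInto ha (mem_insert_self _ _)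
      simp only [h, dif_pos]
      exact congrArg Sum.inr (Subtype.ext (Q.1.ofInsert_insertInto ha _))

theorem card_parts_eq_succ_insert (ha : a ∉ s) (k : ℕ) :
    Nat.card {P : Finpartition (insert a s) // #P.parts = k + 1} =
      (k + 1) * Nat.card {Q : Finpartition s // #Q.parts = k + 1} +
        Nat.card {Q : Finpartition s // #Q.parts = k} := by
  rw [Nat.card_congr (insertEquiv ha k), Nat.card_sum, Nat.card_sigma]
  simp only [Nat.card_eq_finsetCard]
  rw [sum_congr rfl fun Q _ => Q.2, sum_const, card_univ, smul_eq_mul, mul_comm,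
    ← Nat.card_eq_fintype_card]

lemma card_parts_eq_zero_empty :
    Nat.card {P : Finpartition (∅ : Finset α) // #P.parts = 0} = 1 := by
  have : Unique (Finpartition (∅ : Finset α)) := inferInstanceAs (Unique (Finpartition ⊥))
  rw [Nat.card_eq_one_iff_unique]
  exact ⟨inferInstance, ⟨⟨default, card_eq_zero.2 (parts_eq_empty_iff.2 rfl)⟩⟩⟩

theorem card_parts_eq_stirlingSecond (s : Finset α) (k : ℕ) :
    Nat.card {P : Finpartition s // #P.parts = k} = Nat.stirlingSecond #s k := by
  induction s using Finset.induction_on generalizing k with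
  | empty =>
    cases k with
    | zero => exact card_parts_eq_zero_empty
    | succ k => simp [parts_eq_empty_iff.2 rfl]
  | insert a s ha ih =>
    cases k with
    | zero =>
      have hP : ∀ P : Finpartition (insert a s), #P.parts ≠ 0 := fun P h =>
        insert_ne_empty a s (parts_eq_empty_iff.1 (card_eq_zero.1 h))
      simp [hP, card_insert_of_notMem ha]
    | succ k =>
      rw [card_parts_eq_succ_insert ha, ih, ih, card_insert_of_notMem ha,
        Nat.stirlingSecond_succ_succ]

end Finpartition

theorem stirling2_eq_stirlingSecond (m k : ℕ) : stirling2 m k = Nat.stirlingSecond m k := by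
  rw [stirling2, Finpartition.card_parts_eq_stirlingSecond, card_univ, Fintype.card_fin]

lemma Fin.monotone_snoc {α : Type*} [Preorder α] {n : ℕ} {g : Fin n → α} {x : α}
    (hg : Monotone g) (hx : ∀ i, g i ≤ x) : Monotone (Fin.snoc g x : Fin (n + 1) → α) := by
  intro a b hab
  induction b using Fin.lastCases with
  | last =>
    induction a using Fin.lastCases with
    | last => exact le_rfl
    | cast i => simpa using hx i
  | cast j =>
    induction a using Fin.lastCases with
    | last => exact absurd hab (Fin.castSucc_lt_last j).not_ge
    | cast i => simpa using hg (Fin.castSucc_le_castSucc_iff.1 hab)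

section CompleteHomogeneous

variable {R : Type*} [CommSemiring R]

noncomputable def completeHomogeneous (n : ℕ) {k : ℕ} (w : Fin k → R) : R :=
  ∑ f ∈ univ.filter (fun f : Fin n → Fin k => Monotone f), ∏ i, w (f i)

theorem completeHomogeneous_succ_succ (n : ℕ) {k : ℕ} (w : Fin (k + 1) → R) :
    completeHomogeneous (n + 1) w =
      w (Fin.last k) * completeHomogeneous n w +
        completeHomogeneous (n + 1) (w ∘ Fin.castSucc) := by
  rw [completeHomogeneous,
    ← sum_filter_add_sum_filter_not _ (fun f => f (Fin.last n) = Fin.last k),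
    filter_filter, filter_filter]
  congr 1
  · rw [completeHomogeneous, mul_sum]
    symm
    refine sum_nbij' (fun g => Fin.snoc g (Fin.last k)) Fin.init ?_ ?_ ?_ ?_ ?_
    · intro g hg
      simp only [mem_filter, mem_univ, true_and] at hg ⊢
      exact ⟨Fin.monotone_snoc hg fun i => Fin.le_last _, Fin.snoc_last _ _⟩
    · intro f hf
      simp only [mem_filter, mem_univ, true_and] at hf ⊢
      exact hf.1.comp Fin.strictMono_castSucc.monotone
    · intro g _
      exact Fin.init_snoc _ _
    · intro f hf
      rw [← (mem_filter.1 hf).2.2, Fin.snoc_init_self]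
    · intro g _
      simp [Fin.prod_univ_castSucc, mul_comm]
  · symm
    refine sum_bij (fun g _ => Fin.castSucc ∘ g) ?_ ?_ ?_ fun _ _ => rfl
    · intro g hg
      simp only [mem_filter, mem_univ, true_and] at hg ⊢
      exact ⟨Fin.strictMono_castSucc.monotone.comp hg, (Fin.castSucc_lt_last _).ne⟩
    · exact fun g _ g' _ h => funext fun i => Fin.castSucc_injective _ (congrFun h i)
    · intro f hf
      simp only [mem_filter, mem_univ, true_and] at hf
      have hne : ∀ i, f i ≠ Fin.last k := fun i =>
        (lt_of_le_of_lt (hf.1 (Fin.le_last i)) (Fin.lt_last_iff_ne_last.2 hf.2)).ne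
      refine ⟨fun i => (f i).castPred (hne i), ?_, funext fun i => Fin.castSucc_castPred _ _⟩
      simpa using Fin.monotone_castPred_comp hne hf.1

@[simp] lemma completeHomogeneous_zero {k : ℕ} (w : Fin k → R) : completeHomogeneous 0 w = 1 := by
  have hmono (f : Fin 0 → Fin k) : Monotone f := fun a => a.elim0
  simp [completeHomogeneous, hmono]

@[simp] lemma completeHomogeneous_succ_of_isEmpty (n : ℕ) (w : Fin 0 → R) :
    completeHomogeneous (n + 1) w = 0 := by
  simp [completeHomogeneous, univ_eq_empty]

end CompleteHomogeneous

lemma hNat_eq_completeHomogeneous (n k : ℕ) :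
    hNat n k = completeHomogeneous n (fun j : Fin k => (j : ℕ) + 1) := rfl

lemma hNat_succ_succ (n k : ℕ) :
    hNat (n + 1) (k + 1) = (k + 1) * hNat n (k + 1) + hNat (n + 1) k := by
  simp only [hNat_eq_completeHomogeneous, completeHomogeneous_succ_succ n, Fin.val_last]
  rfl

theorem stirlingSecond_add_eq_hNat (n k : ℕ) : Nat.stirlingSecond (n + k) k = hNat n k := by
  induction k generalizing n with
  | zero => cases n <;> simp [hNat_eq_completeHomogeneous]
  | succ k ihk =>
    induction n with
    | zero => simp [hNat_eq_completeHomogeneous, Nat.stirlingSecond_self]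
    | succ n ihn =>
      rw [show n + 1 + (k + 1) = n + k + 1 + 1 by omega, Nat.stirlingSecond_succ_succ,
        hNat_succ_succ, ← ihn, ← ihk, show n + 1 + k = n + k + 1 by omega]
      rfl

def combLatticeEquiv (n k : ℕ) (hk : 0 < k) :
    {q : (Fin n → ℕ) × (Fin n → ℕ) //
        Monotone q.1 ∧ (∀ i, q.1 i ≤ k - 1) ∧ ∀ i, q.2 i ≤ q.1 i} ≃
      Σ x : {x : Fin n → Fin k // Monotone x}, ∀ i, Fin (x.1 i + 1) where
  toFun q := ⟨⟨fun i => ⟨q.1.1 i, by have := q.2.2.1 i; omega⟩, fun _ _ hij => q.2.1 hij⟩,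
    fun i => ⟨q.1.2 i, Nat.lt_succ_of_le (q.2.2.2 i)⟩⟩
  invFun p := ⟨(fun i => p.1.1 i, fun i => p.2 i), fun _ _ hij => p.1.2 hij,
    fun i => Nat.le_sub_one_of_lt (p.1.1 i).isLt, fun i => Nat.le_of_lt_succ (p.2 i).isLt⟩
  left_inv _ := rfl
  right_inv _ := rfl

theorem card_combLattice (n k : ℕ) (hk : 0 < k) :
    Nat.card {q : (Fin n → ℕ) × (Fin n → ℕ) //
        Monotone q.1 ∧ (∀ i, q.1 i ≤ k - 1) ∧ ∀ i, q.2 i ≤ q.1 i} = hNat n k := by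
  rw [Nat.card_congr (combLatticeEquiv n k hk), Nat.card_sigma, hNat]
  simp only [Nat.card_eq_fintype_card, Fintype.card_pi, Fintype.card_fin]
  exact (sum_subtype (univ.filter Monotone) (fun f => by simp)
    fun f : Fin n → Fin k => ∏ i, ((f i : ℕ) + 1)).symm

theorem stmt_9 (n k : ℕ) (hk : 0 < k) :
    Nat.card {q : (Fin n → ℕ) × (Fin n → ℕ) //
        Monotone q.1 ∧ (∀ i, q.1 i ≤ k - 1) ∧ ∀ i, q.2 i ≤ q.1 i} = stirling2 (n + k) k := by
  rw [card_combLattice n k hk, stirling2_eq_stirlingSecond, stirlingSecond_add_eq_hNat]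
end
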